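/- Let $X$ be a compact metric space, $f: X \to X$ continuous, and suppose every $f$-invariant Borel probability measure $\mu$ satisfies $\int \phi \, d\mu > \alpha$ for a fixed continuous function $\phi: X \to \mathbb{R}$ and constant $\alpha$. Then there exists $N$ such that for all $n \geq N$ and all $x \in X$, $\frac{1}{n}\sum_{i=0}^{n-1} \phi(f^i(x)) > \alpha$. -/

import Mathlib

/-!
Suppose the averages fail to exceed `α` along orbit segments of unbounded lengths `n_k`
starting at points `x_k`. The empirical measures `(1/n_k) ∑_{i<n_k} δ_{f^i x_k}` have a weak
limit point `μ` in the compact space of probability measures on `X`. Since pushing an empirical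
measure forward by `f` only moves mass `1/n_k` from `x_k` to `f^{n_k} x_k`, `μ` is invariant,
and `∫ φ dμ ≤ α` as a limit of the averages: this contradicts the hypothesis.
-/

open MeasureTheory Filter Topology BoundedContinuousFunction
open scoped ENNReal

theorem birkhoffAverage_comp_apply {α M : Type*} (R : Type*) [DivisionSemiring R]
    [AddCommMonoid M] [Module R M] (f : α → α) (g : α → M) (n : ℕ) (x : α) :
    birkhoffAverage R f (g ∘ f) n x = birkhoffAverage R f g n (f x) := by
  simp only [birkhoffAverage, birkhoffSum, Function.comp_apply, ← Function.iterate_succ_apply',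
    Function.iterate_succ_apply]

section

variable {X : Type*} [MeasurableSpace X]

/-- At `n = 0` this is the zero measure, as `(0 : ℝ≥0∞)⁻¹ = ∞`. -/
noncomputable def birkhoffMeasure (f : X → X) (n : ℕ) (x : X) : Measure X :=
  (n : ℝ≥0∞)⁻¹ • ∑ k ∈ Finset.range n, Measure.dirac (f^[k] x)

theorem isProbabilityMeasure_birkhoffMeasure (f : X → X) {n : ℕ} (hn : n ≠ 0) (x : X) :
    IsProbabilityMeasure (birkhoffMeasure f n x) := by
  constructor
  simp [birkhoffMeasure, ENNReal.inv_mul_cancel, hn]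

theorem integral_birkhoffMeasure [MeasurableSingletonClass X] {E : Type*} [NormedAddCommGroup E]
    [NormedSpace ℝ E] [CompleteSpace E] (f : X → X) (g : X → E) (n : ℕ) (x : X) :
    ∫ y, g y ∂birkhoffMeasure f n x = birkhoffAverage ℝ f g n x := by
  rw [birkhoffMeasure, integral_smul_measure, integral_finsetSum_measure fun k _ ↦
    integrable_dirac enorm_lt_top]
  simp [birkhoffAverage, birkhoffSum]

theorem tendsto_integral_comp_sub_integral_birkhoffMeasure [MeasurableSingletonClass X]
    [TopologicalSpace X] (f : X → X) (g : X →ᵇ ℝ) {ι : Type*} {l : Filter ι} {n : ι → ℕ}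
    (hn : Tendsto n l atTop) (x : ι → X) :
    Tendsto (fun i ↦ ∫ y, g (f y) ∂birkhoffMeasure f (n i) (x i) -
      ∫ y, g y ∂birkhoffMeasure f (n i) (x i)) l (𝓝 0) := by
  have hbound : ∀ i, ‖∫ y, g (f y) ∂birkhoffMeasure f (n i) (x i) -
      ∫ y, g y ∂birkhoffMeasure f (n i) (x i)‖ ≤ 2 * ‖g‖ / n i := fun i ↦ by
    rw [← dist_eq_norm, integral_birkhoffMeasure, integral_birkhoffMeasure,
      show (fun y ↦ g (f y)) = g ∘ f from rfl, birkhoffAverage_comp_apply,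
      dist_birkhoffAverage_apply_birkhoffAverage]
    gcongr
    exact g.dist_le_two_norm _ _
  exact squeeze_zero_norm hbound
    ((tendsto_const_nhds.div_atTop tendsto_natCast_atTop_atTop).comp hn)

end

section

variable {X : Type*} [MeasurableSpace X] [TopologicalSpace X] [HasOuterApproxClosed X]
  [BorelSpace X]

theorem measurePreserving_of_tendsto_integral_comp_sub {f : X → X} (hf : Continuous f)
    {ι : Type*} {l : Filter ι} [l.NeBot] {ν : ι → ProbabilityMeasure X} {μ : ProbabilityMeasure X}
    (hν : Tendsto ν l (𝓝 μ))
    (h : ∀ g : X →ᵇ ℝ, Tendsto (fun i ↦ ∫ y, g (f y) ∂ν i - ∫ y, g y ∂ν i) l (𝓝 0)) :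
    MeasurePreserving f μ μ := by
  refine ⟨hf.measurable, ext_of_forall_integral_eq_of_IsFiniteMeasure fun g ↦ ?_⟩
  have hlim := ProbabilityMeasure.tendsto_iff_forall_integral_tendsto.1 hν
  rw [integral_map hf.aemeasurable g.continuous.aestronglyMeasurable, ← sub_eq_zero]
  exact tendsto_nhds_unique ((hlim (g.compContinuous ⟨f, hf⟩)).sub (hlim g)) (h g)

end

section

variable {X : Type*} [MetricSpace X] [CompactSpace X] [MeasurableSpace X] [BorelSpace X]

theorem exists_measurePreserving_integral_le_of_birkhoffAverage_le {f : X → X} (hf : Continuous f)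
    {φ : X → ℝ} (hφ : Continuous φ) {ι : Type*} {l : Filter ι} [l.NeBot] {n : ι → ℕ}
    (hn₀ : ∀ i, n i ≠ 0) (hn : Tendsto n l atTop) {x : ι → X} {α : ℝ}
    (hα : ∀ᶠ i in l, birkhoffAverage ℝ f φ (n i) (x i) ≤ α) :
    ∃ μ : Measure X, IsProbabilityMeasure μ ∧ MeasurePreserving f μ μ ∧ ∫ y, φ y ∂μ ≤ α := by
  let ν : ι → ProbabilityMeasure X := fun i ↦
    ⟨birkhoffMeasure f (n i) (x i), isProbabilityMeasure_birkhoffMeasure f (hn₀ i) (x i)⟩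
  obtain ⟨U, hU⟩ := Ultrafilter.exists_le l
  obtain ⟨μ, -, hνμ⟩ := isCompact_univ.ultrafilter_le_nhds (U.map ν) (by simp)
  have hνμ : Tendsto ν U (𝓝 μ) := hνμ
  refine ⟨μ, inferInstance, measurePreserving_of_tendsto_integral_comp_sub hf hνμ fun g ↦
    tendsto_integral_comp_sub_integral_birkhoffMeasure f g (hn.mono_left hU) x, ?_⟩
  have hφν := ProbabilityMeasure.tendsto_iff_forall_integral_tendsto.1 hνμ (mkOfCompact ⟨φ, hφ⟩)
  refine le_of_tendsto hφν ((hα.filter_mono hU).mono fun i hi ↦ ?_)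
  simpa [ν, integral_birkhoffMeasure] using hi

end

theorem uniform_birkhoff_lower_bound_general
    {X : Type*} [MetricSpace X] [CompactSpace X]
    [MeasurableSpace X] [BorelSpace X]
    (f : X → X) (hf : Continuous f)
    (φ : X → ℝ) (hφ : Continuous φ) (α : ℝ)
    (hmeas : ∀ μ : Measure X, IsProbabilityMeasure μ → MeasurePreserving f μ μ →
      α < ∫ x, φ x ∂μ) :
    ∃ N : ℕ, ∀ n ≥ N, ∀ x : X,
      α < (∑ i ∈ Finset.range n, φ (f^[i] x)) / n := by
  by_contra! hbad
  choose n hn x hx using fun k ↦ hbad (k + 1)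
  obtain ⟨μ, hμ, hfμ, hφμ⟩ := exists_measurePreserving_integral_le_of_birkhoffAverage_le hf hφ
    (l := atTop) (fun k ↦ by have := hn k; omega)
    (tendsto_atTop_mono (fun k ↦ (k.le_succ.trans (hn k))) tendsto_id)
    (Eventually.of_forall fun k ↦ by
      simpa [birkhoffAverage, birkhoffSum, inv_mul_eq_div] using hx k)
  exact (hmeas μ hμ hfμ).not_ge hφμ

theorem uniform_birkhoff_lower_bound
    {X : Type*} [MetricSpace X] [CompactSpace X] [Nonempty X]
    [MeasurableSpace X] [BorelSpace X]
    (f : X → X) (hf : Continuous f)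
    (φ : X → ℝ) (hφ : Continuous φ) (α : ℝ)
    (hmeas : ∀ μ : Measure X, IsProbabilityMeasure μ → MeasurePreserving f μ μ →
      α < ∫ x, φ x ∂μ) :
    ∃ N : ℕ, ∀ n ≥ N, ∀ x : X,
      α < (∑ i ∈ Finset.range n, φ (f^[i] x)) / n :=
  uniform_birkhoff_lower_bound_general f hf φ hφ α hmeas
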